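/- arXiv:2311.04237 — 4 statements merged into one kernel-verified Lean document; each statement's English description precedes it below -/
import Mathlib

section
/- Let A, B, C be d×d Hermitian matrices with A positive semi-definite and B positive definite. If ⟨v, Av⟩·⟨v, Bv⟩ ≥ ⟨v, Cv⟩² for all v ∈ ℂ^d, then tr(AB⁻¹) ≥ tr(B⁻¹CB⁻¹C). -/
/-!
With `T = B^{-1/2}`, the substitution `v ↦ T v` turns the hypothesis into the same one for
`TAT`, `1`, `TCT`, and both traces are unchanged by this substitution. When `B = 1`, evaluating
the hypothesis at a unit eigenvector `uᵢ` of `C` with eigenvalue `λᵢ` gives `λᵢ² ≤ ⟨uᵢ, A uᵢ⟩`;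
summing over an orthonormal eigenbasis of `C` gives `tr C² ≤ tr A`.
-/

open Matrix
open scoped ComplexOrder

namespace Matrix

theorem star_mulVec_dotProduct_mulVec_mulVec {R m n : Type*} [CommSemiring R] [StarRing R]
    [Fintype m] [Fintype n] (T : Matrix m n R) (M : Matrix m m R) (v : n → R) :
    star (T *ᵥ v) ⬝ᵥ M *ᵥ T *ᵥ v = star v ⬝ᵥ (Tᴴ * M * T) *ᵥ v := by
  rw [star_mulVec, ← dotProduct_mulVec, mulVec_mulVec, mulVec_mulVec]

variable {𝕜 n : Type*} [RCLike 𝕜] [Fintype n] [DecidableEq n]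

theorem trace_eq_sum_star_dotProduct_mulVec (M : Matrix n n 𝕜)
    (b : OrthonormalBasis n 𝕜 (EuclideanSpace 𝕜 n)) :
    M.trace = ∑ i, star ⇑(b i) ⬝ᵥ M *ᵥ ⇑(b i) := by
  have htrace : LinearMap.trace 𝕜 _ (toEuclideanLin M) = M.trace := by
    rw [← trace_toLin'_eq]
    exact LinearMap.trace_conj' _ _
  rw [← htrace, LinearMap.trace_eq_sum_inner _ b]
  simp [EuclideanSpace.inner_eq_star_dotProduct, dotProduct_comm]

theorem IsHermitian.re_trace_mul_self_le_of_sq_le {A C : Matrix n n 𝕜} (hC : C.IsHermitian)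
    (h : ∀ v, RCLike.re (star v ⬝ᵥ C *ᵥ v) ^ 2 ≤
      RCLike.re (star v ⬝ᵥ A *ᵥ v) * RCLike.re (star v ⬝ᵥ v)) :
    RCLike.re (C * C).trace ≤ RCLike.re A.trace := by
  set b := hC.eigenvectorBasis
  have hunit (i : n) : star ⇑(b i) ⬝ᵥ ⇑(b i) = 1 := by
    rw [dotProduct_comm, ← EuclideanSpace.inner_eq_star_dotProduct, b.inner_eq_one]
  have hsq (i : n) : star ⇑(b i) ⬝ᵥ (C * C) *ᵥ ⇑(b i) = (hC.eigenvalues i : 𝕜) ^ 2 := by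
    rw [← mulVec_mulVec, hC.mulVec_eigenvectorBasis, mulVec_smul, hC.mulVec_eigenvectorBasis,
      smul_smul, dotProduct_smul, hunit, RCLike.real_smul_eq_coe_smul (K := 𝕜)]
    simp [sq]
  rw [trace_eq_sum_star_dotProduct_mulVec _ b, trace_eq_sum_star_dotProduct_mulVec _ b,
    map_sum, map_sum]
  refine Finset.sum_le_sum fun i _ => ?_
  have hi := h (b i)
  rw [hunit, ← hC.eigenvalues_eq] at hi
  simpa [hsq] using hi

open scoped MatrixOrder in
theorem PosDef.exists_isHermitian_mul_self_eq_inv {B : Matrix n n 𝕜} (hB : B.PosDef) :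
    ∃ T : Matrix n n 𝕜, T.IsHermitian ∧ T * T = B⁻¹ ∧ T * B * T = 1 := by
  set S := CFC.sqrt B
  have hSS : S * S = B := CFC.sqrt_mul_sqrt_self B hB.posSemidef.nonneg
  have hS : IsUnit S.det :=
    (isUnit_iff_isUnit_det S).mp (isUnit_of_mul_isUnit_left (hSS ▸ hB.isUnit))
  refine ⟨S⁻¹, (CFC.sqrt_nonneg B).posSemidef.1.inv, by rw [← hSS, mul_inv_rev], ?_⟩
  rw [← hSS, ← mul_assoc, nonsing_inv_mul S hS, one_mul, mul_nonsing_inv S hS]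

end Matrix

theorem trace_ineq_general {d : ℕ} (A B C : Matrix (Fin d) (Fin d) ℂ)
    (hB : B.PosDef) (hC : C.IsHermitian)
    (h : ∀ v : Fin d → ℂ,
      (star v ⬝ᵥ A.mulVec v).re * (star v ⬝ᵥ B.mulVec v).re ≥ ((star v ⬝ᵥ C.mulVec v).re) ^ 2) :
    (Matrix.trace (B⁻¹ * C * B⁻¹ * C)).re ≤ (Matrix.trace (A * B⁻¹)).re := by
  obtain ⟨T, hT, hTT, hTBT⟩ := hB.exists_isHermitian_mul_self_eq_inv
  have hTCT : (T * C * T).IsHermitian := by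
    simpa only [hT.eq] using isHermitian_conjTranspose_mul_mul T hC
  have hquad (M : Matrix (Fin d) (Fin d) ℂ) (v : Fin d → ℂ) :
      star (T *ᵥ v) ⬝ᵥ M *ᵥ T *ᵥ v = star v ⬝ᵥ (T * M * T) *ᵥ v := by
    rw [star_mulVec_dotProduct_mulVec_mulVec, hT.eq]
  have key := hTCT.re_trace_mul_self_le_of_sq_le (A := T * A * T) fun v => by
    have hv := h (T *ᵥ v)
    rwa [hquad, hquad, hquad, hTBT, one_mulVec] at hv
  have htrA : (A * B⁻¹).trace = (T * A * T).trace := by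
    rw [← hTT, ← mul_assoc, trace_mul_cycle]
  have htrC : (B⁻¹ * C * B⁻¹ * C).trace = (T * C * T * (T * C * T)).trace := by
    rw [← hTT, show T * T * C * (T * T) * C = T * (T * C * T * T * C) by simp only [mul_assoc],
      trace_mul_comm]
    simp only [mul_assoc]
  rw [htrA, htrC]
  exact key

/-- Let `A, B, C` be `d × d` Hermitian matrices with `A` positive semi-definite and `B`
positive definite. If `⟨v, Av⟩ ⟨v, Bv⟩ ≥ ⟨v, Cv⟩²` for all `v ∈ ℂᵈ`, then
`tr(AB⁻¹) ≥ tr(B⁻¹CB⁻¹C)`. -/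
theorem trace_ineq {d : ℕ} (A B C : Matrix (Fin d) (Fin d) ℂ)
    (hA : A.PosSemidef) (hB : B.PosDef) (hC : C.IsHermitian)
    (h : ∀ v : Fin d → ℂ,
      (star v ⬝ᵥ A.mulVec v).re * (star v ⬝ᵥ B.mulVec v).re ≥ ((star v ⬝ᵥ C.mulVec v).re) ^ 2) :
    (Matrix.trace (B⁻¹ * C * B⁻¹ * C)).re ≤ (Matrix.trace (A * B⁻¹)).re :=
  trace_ineq_general A B C hB hC h
end

section
/- Let φ₁, φ₂ : H → ℝ be VB-convex functions on a real Hilbert space H, and let α, β > 0. Then αφ₁ + βφ₂ is VB-convex. -/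
/-!
At every `x, u, v` the VB-inequality says that `A = D⁴φ(x)[u,u,v,v]`, `B = D²φ(x)[v,v]` and
`C = D³φ(x)[u,v,v]` satisfy `(3/2) C² ≤ A B`. Once `A, B ≥ 0` as well, such triples form a convex
cone: the cross term is handled by AM-GM, `(3 C₁ C₂)² ≤ 4 (A₁ B₁) (A₂ B₂) ≤ (A₁ B₂ + A₂ B₁)²`.
Since derivatives are linear in `φ`, this gives the inequality for `α φ₁ + β φ₂`.

`B ≥ 0` is convexity along the line `x + t v`. Where `B > 0`, `A ≥ 0` follows from the
VB-inequality itself. Where `B = 0`, the function `y ↦ D²φ(y)[v,v]` is nonnegative and vanishes at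
`x`, so it has a minimum there and its second derivative `A` in direction `u` is nonnegative.
-/

open Topology

/-- If `deriv (deriv f) a < 0`, the second-derivative test makes `a` a local maximum as well, so `f`
is locally constant near `a` and `deriv (deriv f) a = 0` after all. -/
theorem IsLocalMin.deriv_deriv_nonneg {f : ℝ → ℝ} {a : ℝ} (h : IsLocalMin f a)
    (hc : ContinuousAt f a) : 0 ≤ deriv (deriv f) a := by
  by_contra! hneg
  have hconst : f =ᶠ[𝓝 a] fun _ => f a :=
    (h.and (isLocalMax_of_deriv_deriv_neg hneg h.deriv_eq_zero hc)).mono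
      fun _ hx => le_antisymm hx.2 hx.1
  have hderiv : deriv f =ᶠ[𝓝 a] fun _ => 0 :=
    hconst.eventuallyEq_nhds.mono fun _ hy => by rw [hy.deriv_eq, deriv_const]
  rw [hderiv.deriv_eq, deriv_const] at hneg
  exact hneg.false

section

variable {E F : Type*} [NormedAddCommGroup E] [NormedSpace ℝ E]
  [NormedAddCommGroup F] [NormedSpace ℝ F]

theorem deriv_deriv_comp_line {f : E → F} (hf : ContDiff ℝ 2 f) (x v : E) (t : ℝ) :
    deriv (deriv fun s : ℝ => f (x + s • v)) t = iteratedFDeriv ℝ 2 f (x + t • v) ![v, v] := by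
  set L : ℝ →L[ℝ] E := ContinuousLinearMap.smulRight (1 : ℝ →L[ℝ] ℝ) v
  have hline : (fun s : ℝ => f (x + s • v)) = (fun y => f (x + y)) ∘ L := rfl
  have hfx : ContDiff ℝ 2 fun y => f (x + y) := hf.comp (contDiff_const.add contDiff_id)
  have hvv : (![v, v] : Fin 2 → E) = fun _ => L 1 := by
    funext i; fin_cases i <;> simp [L]
  rw [← iteratedDeriv_one, ← iteratedDeriv_succ', iteratedDeriv_eq_iteratedFDeriv, hline,
    L.iteratedFDeriv_comp_right hfx t le_rfl, iteratedFDeriv_comp_add_left, hvv]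
  simp [L]

theorem ContDiff.iteratedFDeriv_two_nonneg_of_isLocalMin {f : E → ℝ} (hf : ContDiff ℝ 2 f)
    {x : E} (hx : IsLocalMin f x) (v : E) : 0 ≤ iteratedFDeriv ℝ 2 f x ![v, v] := by
  have hline : Continuous fun s : ℝ => x + s • v := by fun_prop
  have hmin : IsLocalMin (fun s : ℝ => f (x + s • v)) 0 :=
    IsLocalMin.comp_continuous (by simpa using hx) hline.continuousAt
  simpa [deriv_deriv_comp_line hf] using
    hmin.deriv_deriv_nonneg (hf.continuous.comp hline).continuousAt

theorem ConvexOn.iteratedFDeriv_two_nonneg {f : E → ℝ} (hconv : ConvexOn ℝ Set.univ f)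
    (hf : ContDiff ℝ 2 f) (x v : E) : 0 ≤ iteratedFDeriv ℝ 2 f x ![v, v] := by
  set L : ℝ →ₗ[ℝ] E := LinearMap.smulRight LinearMap.id v
  have hline : ConvexOn ℝ Set.univ fun s : ℝ => f (x + s • v) :=
    (hconv.translate_right x).comp_linearMap L
  have hdiff : Differentiable ℝ fun s : ℝ => f (x + s • v) :=
    (hf.differentiable (by norm_num)).comp (by fun_prop)
  have hmono : Monotone (deriv fun s : ℝ => f (x + s • v)) :=
    monotoneOn_univ.mp (hline.monotoneOn_deriv fun s _ => hdiff s)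
  simpa [deriv_deriv_comp_line hf] using hmono.deriv_nonneg (x := 0)

theorem iteratedFDeriv_four_apply (f : E → F) (x a b c d : E) :
    iteratedFDeriv ℝ 4 f x ![a, b, c, d] =
      iteratedFDeriv ℝ 2 (fderiv ℝ (fderiv ℝ f)) x ![a, b] c d := by
  have hinit : Fin.init (Fin.init ![a, b, c, d]) = ![a, b] := by
    ext i; fin_cases i <;> rfl
  rw [iteratedFDeriv_succ_apply_right, iteratedFDeriv_succ_apply_right, hinit]
  rfl

theorem iteratedFDeriv_four_apply_eq_iteratedFDeriv_two {f : E → F} (hf : ContDiff ℝ 4 f)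
    (x a b c d : E) :
    iteratedFDeriv ℝ 4 f x ![a, b, c, d] =
      iteratedFDeriv ℝ 2 (fun y => iteratedFDeriv ℝ 2 f y ![c, d]) x ![a, b] := by
  set ev : (E →L[ℝ] E →L[ℝ] F) →L[ℝ] F :=
    (ContinuousLinearMap.apply ℝ F d).comp (ContinuousLinearMap.apply ℝ (E →L[ℝ] F) c)
  have hG : ContDiff ℝ 2 (fderiv ℝ (fderiv ℝ f)) :=
    (hf.fderiv_right (m := 3) (by norm_num)).fderiv_right (by norm_num)
  have hψ : (fun y => iteratedFDeriv ℝ 2 f y ![c, d]) = ev ∘ fderiv ℝ (fderiv ℝ f) := by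
    funext y
    simp [iteratedFDeriv_two_apply, ev]
  rw [hψ, ev.iteratedFDeriv_comp_left hG.contDiffAt le_rfl, iteratedFDeriv_four_apply]
  rfl

theorem ConvexOn.iteratedFDeriv_four_nonneg {f : E → ℝ} (hconv : ConvexOn ℝ Set.univ f)
    (hf : ContDiff ℝ 4 f) {x v : E} (hv : iteratedFDeriv ℝ 2 f x ![v, v] = 0) (u : E) :
    0 ≤ iteratedFDeriv ℝ 4 f x ![u, u, v, v] := by
  set ψ : E → ℝ := fun y => iteratedFDeriv ℝ 2 f y ![v, v]
  have hψ : ContDiff ℝ 2 ψ :=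
    (ContinuousMultilinearMap.apply ℝ (fun _ : Fin 2 => E) ℝ ![v, v]).contDiff.comp
      (hf.iteratedFDeriv_right (by norm_num))
  have hmin : IsLocalMin ψ x := IsMinOn.isLocalMin
    (fun y _ => by simpa [ψ, hv] using hconv.iteratedFDeriv_two_nonneg (hf.of_le (by norm_num)) y v)
    Filter.univ_mem
  rw [iteratedFDeriv_four_apply_eq_iteratedFDeriv_two hf]
  exact hψ.iteratedFDeriv_two_nonneg_of_isLocalMin hmin u

theorem iteratedFDeriv_const_mul_add_const_mul_apply {n : ℕ} {f g : E → ℝ} {x : E}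
    (hf : ContDiffAt ℝ n f x) (hg : ContDiffAt ℝ n g x) (a b : ℝ) (m : Fin n → E) :
    iteratedFDeriv ℝ n (fun y => a * f y + b * g y) x m =
      a * iteratedFDeriv ℝ n f x m + b * iteratedFDeriv ℝ n g x m := by
  have hcomb := fun_iteratedFDeriv_add_apply (hf.const_smul a) (hg.const_smul b)
  rw [iteratedFDeriv_const_smul_apply' hf, iteratedFDeriv_const_smul_apply' hg] at hcomb
  simpa using congr($hcomb m)

end

theorem StrictConvexOn.const_mul {E : Type*} [AddCommMonoid E] [Module ℝ E] {s : Set E}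
    {f : E → ℝ} (hf : StrictConvexOn ℝ s f) {c : ℝ} (hc : 0 < c) :
    StrictConvexOn ℝ s fun x => c * f x :=
  ⟨hf.1, fun x hx y hy hxy a b ha hb hab => by
    simpa only [smul_eq_mul, mul_add, mul_left_comm c] using
      mul_lt_mul_of_pos_left (hf.2 hx hy hxy ha hb hab) hc⟩

theorem mul_sq_add_le_mul_add_of_mul_sq_le_mul {k α β A₁ B₁ C₁ A₂ B₂ C₂ : ℝ} (hk : 0 ≤ k)
    (hα : 0 ≤ α) (hβ : 0 ≤ β) (hA₁ : 0 ≤ A₁) (hB₁ : 0 ≤ B₁) (hA₂ : 0 ≤ A₂) (hB₂ : 0 ≤ B₂)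
    (h₁ : k * C₁ ^ 2 ≤ A₁ * B₁) (h₂ : k * C₂ ^ 2 ≤ A₂ * B₂) :
    k * (α * C₁ + β * C₂) ^ 2 ≤ (α * A₁ + β * A₂) * (α * B₁ + β * B₂) := by
  have hcross_sq : (2 * k * C₁ * C₂) ^ 2 ≤ (A₁ * B₂ + A₂ * B₁) ^ 2 :=
    calc (2 * k * C₁ * C₂) ^ 2 = 4 * ((k * C₁ ^ 2) * (k * C₂ ^ 2)) := by ring
      _ ≤ 4 * ((A₁ * B₁) * (A₂ * B₂)) := by gcongr
      _ ≤ (A₁ * B₂ + A₂ * B₁) ^ 2 := by nlinarith [sq_nonneg (A₁ * B₂ - A₂ * B₁)]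
  have hcross : 2 * k * C₁ * C₂ ≤ A₁ * B₂ + A₂ * B₁ :=
    (abs_le_of_sq_le_sq' hcross_sq (by positivity)).2
  nlinarith [mul_le_mul_of_nonneg_left h₁ (sq_nonneg α), mul_le_mul_of_nonneg_left h₂ (sq_nonneg β),
    mul_le_mul_of_nonneg_left hcross (mul_nonneg hα hβ)]

/-- A function `φ : H → ℝ` on a real Hilbert space is VB-convex if it is `C⁴`,
strictly convex, and
`D⁴φ(x)[u,u,v,v] ⬝ D²φ(x)[v,v] ≥ (3/2) (D³φ(x)[u,v,v])²` for all `x, u, v`. -/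
def VBConvex {H : Type*} [NormedAddCommGroup H] [InnerProductSpace ℝ H] (φ : H → ℝ) : Prop :=
  ContDiff ℝ 4 φ ∧ StrictConvexOn ℝ Set.univ φ ∧
    ∀ x u v : H,
      iteratedFDeriv ℝ 4 φ x ![u, u, v, v] * iteratedFDeriv ℝ 2 φ x ![v, v] ≥
        (3 / 2) * (iteratedFDeriv ℝ 3 φ x ![u, v, v]) ^ 2

namespace VBConvex

variable {H : Type*} [NormedAddCommGroup H] [InnerProductSpace ℝ H] {φ : H → ℝ}

theorem iteratedFDeriv_two_nonneg (h : VBConvex φ) (x v : H) :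
    0 ≤ iteratedFDeriv ℝ 2 φ x ![v, v] :=
  h.2.1.convexOn.iteratedFDeriv_two_nonneg (h.1.of_le (by norm_num)) x v

theorem iteratedFDeriv_four_nonneg (h : VBConvex φ) (x u v : H) :
    0 ≤ iteratedFDeriv ℝ 4 φ x ![u, u, v, v] := by
  rcases (h.iteratedFDeriv_two_nonneg x v).eq_or_lt' with hv | hv
  · exact h.2.1.convexOn.iteratedFDeriv_four_nonneg h.1 hv u
  · exact nonneg_of_mul_nonneg_left ((h.2.2 x u v).trans' (by positivity)) hv

end VBConvex

/-- If `φ₁` and `φ₂` are VB-convex and `α, β > 0`, then `α φ₁ + β φ₂` is VB-convex. -/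
theorem vbConvex_add {H : Type*} [NormedAddCommGroup H] [InnerProductSpace ℝ H]
    (φ₁ φ₂ : H → ℝ) (hφ₁ : VBConvex φ₁) (hφ₂ : VBConvex φ₂)
    (α β : ℝ) (hα : 0 < α) (hβ : 0 < β) :
    VBConvex (fun x => α * φ₁ x + β * φ₂ x) := by
  refine ⟨(hφ₁.1.const_smul α).add (hφ₂.1.const_smul β),
    (hφ₁.2.1.const_mul hα).add (hφ₂.2.1.const_mul hβ), fun x u v => ?_⟩
  have hcomb (n : ℕ) (hn : n ≤ 4) := iteratedFDeriv_const_mul_add_const_mul_apply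
    ((hφ₁.1.of_le (by exact_mod_cast hn)).contDiffAt (x := x))
    ((hφ₂.1.of_le (by exact_mod_cast hn)).contDiffAt) α β
  rw [hcomb 4 le_rfl, hcomb 2 (by norm_num), hcomb 3 (by norm_num)]
  exact mul_sq_add_le_mul_add_of_mul_sq_le_mul (by norm_num) hα.le hβ.le
    (hφ₁.iteratedFDeriv_four_nonneg x u v) (hφ₁.iteratedFDeriv_two_nonneg x v)
    (hφ₂.iteratedFDeriv_four_nonneg x u v) (hφ₂.iteratedFDeriv_two_nonneg x v)
    (hφ₁.2.2 x u v) (hφ₂.2.2 x u v)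
end

section
/- The negative log-determinant function R(ρ) = −log det ρ on Hermitian positive definite d×d matrices is VB-convex: for all Hermitian U, V, D⁴R(ρ)[U,U,V,V]·D²R(ρ)[V,V] ≥ (3/2)(D³R(ρ)[U,V,V])². -/
open Matrix
open scoped ComplexOrder

/-!
Conjugating by a factor `ρ⁻¹ = Sᴴ S` turns the four traces into `tr(A²B²)`, `tr(ABAB)`, `tr(B²)`
and `tr(B²A)` for the Hermitian matrices `A = S U Sᴴ`, `B = S V Sᴴ`. Cauchy–Schwarz for the
Hilbert–Schmidt product, applied to the pair `(BA, AB)`, gives `tr(ABAB) ≤ tr(A²B²)`, and applied to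
`(AB + BA, B)` gives `2 tr(B²A)² ≤ (tr(A²B²) + tr(ABAB)) tr(B²)`. Writing
`4 tr(A²B²) + 2 tr(ABAB) = 3 (tr(A²B²) + tr(ABAB)) + (tr(A²B²) - tr(ABAB))` finishes the proof.
-/

namespace Matrix

open RCLike

variable {𝕜 : Type*} [RCLike 𝕜] {m n : Type*} [Fintype m] [Fintype n]

lemma re_trace_conjTranspose_mul_self_nonneg (X : Matrix m n 𝕜) : 0 ≤ re (Xᴴ * X).trace :=
  (nonneg_iff.mp (posSemidef_conjTranspose_mul_self X).trace_nonneg).1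

lemma re_trace_conjTranspose_mul_comm (X Y : Matrix m n 𝕜) :
    re (Yᴴ * X).trace = re (Xᴴ * Y).trace := by
  rw [← conjTranspose_conjTranspose X, ← conjTranspose_mul, trace_conjTranspose,
    conjTranspose_conjTranspose, star_def, conj_re]

lemma re_trace_conjTranspose_mul_sq_le (X Y : Matrix m n 𝕜) :
    re (Xᴴ * Y).trace ^ 2 ≤ re (Xᴴ * X).trace * re (Yᴴ * Y).trace := by
  have hquad (t : ℝ) :
      0 ≤ re (Yᴴ * Y).trace * (t * t) + 2 * re (Xᴴ * Y).trace * t + re (Xᴴ * X).trace := by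
    have h := re_trace_conjTranspose_mul_self_nonneg (X + (t : 𝕜) • Y)
    simp only [conjTranspose_add, conjTranspose_smul, Matrix.add_mul, Matrix.mul_add,
      Matrix.smul_mul, Matrix.mul_smul, trace_add, trace_smul, star_def, conj_ofReal,
      map_add, smul_eq_mul, re_ofReal_mul, re_trace_conjTranspose_mul_comm X Y] at h
    linarith
  have := discrim_le_zero hquad
  rw [discrim] at this
  nlinarith

variable {A B : Matrix n n 𝕜}

lemma trace_mul_mul_mul_rotate (A B C D : Matrix n n 𝕜) :
    (A * B * C * D).trace = (B * C * D * A).trace := by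
  simp only [Matrix.mul_assoc]
  rw [trace_mul_comm A]
  simp only [Matrix.mul_assoc]

lemma IsHermitian.re_trace_mul_mul_mul_le (hA : A.IsHermitian) (hB : B.IsHermitian) :
    re (A * B * A * B).trace ≤ re (A * A * B * B).trace := by
  have hABBA : (A * B * B * A).trace = (A * A * B * B).trace :=
    (trace_mul_mul_mul_rotate A A B B).symm
  have hBAAB : (B * A * A * B).trace = (A * A * B * B).trace := trace_mul_mul_mul_rotate ..
  have hcs := re_trace_conjTranspose_mul_sq_le (B * A) (A * B)
  simp only [conjTranspose_mul, hA.eq, hB.eq, ← Matrix.mul_assoc, hABBA, hBAAB, ← sq] at hcs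
  have hnonneg : 0 ≤ re (A * A * B * B).trace := by
    simpa only [conjTranspose_mul, hA.eq, hB.eq, ← Matrix.mul_assoc, hBAAB] using
      re_trace_conjTranspose_mul_self_nonneg (A * B)
  exact le_of_abs_le (abs_le_of_sq_le_sq hcs hnonneg)

lemma IsHermitian.two_mul_re_trace_mul_sq_le (hA : A.IsHermitian) (hB : B.IsHermitian) :
    2 * re (B * B * A).trace ^ 2 ≤
      (re (A * A * B * B).trace + re (A * B * A * B).trace) * re (B * B).trace := by
  have hcs := re_trace_conjTranspose_mul_sq_le (A * B + B * A) B
  have hmix : ((A * B + B * A)ᴴ * B).trace = 2 * (B * B * A).trace := by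
    simp only [conjTranspose_add, conjTranspose_mul, hA.eq, hB.eq, Matrix.add_mul, trace_add,
      trace_mul_cycle A B B, trace_mul_cycle B A B]
    ring
  have hsq : ((A * B + B * A)ᴴ * (A * B + B * A)).trace =
      2 * (A * A * B * B).trace + 2 * (A * B * A * B).trace := by
    simp only [conjTranspose_add, conjTranspose_mul, hA.eq, hB.eq, Matrix.add_mul, Matrix.mul_add,
      trace_add, ← Matrix.mul_assoc]
    rw [trace_mul_mul_mul_rotate B A A B, trace_mul_mul_mul_rotate B A B A,
      ← trace_mul_mul_mul_rotate A A B B]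
    ring
  simp only [hmix, hsq, hB.eq, ofNat_mul_re, map_add] at hcs
  nlinarith

lemma IsHermitian.three_halves_mul_sq_re_trace_le (hA : A.IsHermitian) (hB : B.IsHermitian) :
    3 / 2 * (-2 * re (B * B * A).trace) ^ 2 ≤
      (4 * re (A * A * B * B).trace + 2 * re (A * B * A * B).trace) * re (B * B).trace := by
  have hBB : 0 ≤ re (B * B).trace := by
    simpa only [hB.eq] using re_trace_conjTranspose_mul_self_nonneg B
  nlinarith [hA.re_trace_mul_mul_mul_le hB, hA.two_mul_re_trace_mul_sq_le hB]

end Matrix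

/-- The negative log-determinant `R(ρ) = -log det ρ` on Hermitian positive definite `d × d`
matrices is VB-convex: with `D²R(ρ)[V,V] = tr(ρ⁻¹Vρ⁻¹V)`,
`D³R(ρ)[U,V,V] = -2 tr(ρ⁻¹Vρ⁻¹Vρ⁻¹U)` and
`D⁴R(ρ)[U,U,V,V] = 4 tr(ρ⁻¹Uρ⁻¹Uρ⁻¹Vρ⁻¹V) + 2 tr(ρ⁻¹Uρ⁻¹Vρ⁻¹Uρ⁻¹V)`, one has
`D⁴R(ρ)[U,U,V,V] ⬝ D²R(ρ)[V,V] ≥ (3/2) (D³R(ρ)[U,V,V])²` for all Hermitian `U, V`. -/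
theorem logDet_vbConvex {d : ℕ} (ρ U V : Matrix (Fin d) (Fin d) ℂ)
    (hρ : ρ.PosDef) (hU : U.IsHermitian) (hV : V.IsHermitian) :
    (4 * (Matrix.trace (ρ⁻¹ * U * ρ⁻¹ * U * ρ⁻¹ * V * ρ⁻¹ * V)).re +
        2 * (Matrix.trace (ρ⁻¹ * U * ρ⁻¹ * V * ρ⁻¹ * U * ρ⁻¹ * V)).re) *
      (Matrix.trace (ρ⁻¹ * V * ρ⁻¹ * V)).re ≥
    (3 / 2) * ((-2) * (Matrix.trace (ρ⁻¹ * V * ρ⁻¹ * V * ρ⁻¹ * U)).re) ^ 2 := by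
  obtain ⟨S, hS⟩ : ∃ S, ρ⁻¹ = star S * S := by
    open scoped MatrixOrder in
    exact CStarAlgebra.nonneg_iff_eq_star_mul_self.mp hρ.inv.posSemidef.nonneg
  have key := (isHermitian_mul_mul_conjTranspose S hU).three_halves_mul_sq_re_trace_le
    (isHermitian_mul_mul_conjTranspose S hV)
  have hconj (W : Matrix (Fin d) (Fin d) ℂ) : (Sᴴ * (S * W)).trace = (S * (W * Sᴴ)).trace := by
    rw [trace_mul_comm, Matrix.mul_assoc]
  rw [hS, star_eq_conjTranspose]
  simp only [Matrix.mul_assoc, hconj] at key ⊢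
  exact key
end

section
/- Let f be a 1-self-concordant function on a real Hilbert space, x in its domain with ∇²f(x) positive definite, and g ∈ H. If D³f(x)[u,v,w] satisfies |D³f(x)[u,v,w]| ≤ 2‖u‖_{∇²f(x)}‖v‖_{∇²f(x)}‖w‖_{∇²f(x)} for all u,v,w, then for w defined by ⟨w,u⟩ = −D³f(x)[u, ∇⁻²f(x)g, ∇⁻²f(x)g], it holds that ‖w‖_{∇⁻²f(x)} ≤ 2‖g‖²_{∇⁻²f(x)}. -/
/-!
Testing the linear functional `u ↦ ⟨w, u⟩` against `u = H⁻¹w` gives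
`‖w‖²_{H⁻¹} = -D³f(x)[H⁻¹w, H⁻¹g, H⁻¹g] ≤ 2 ‖w‖_{H⁻¹} ‖g‖²_{H⁻¹}`,
because `‖H⁻¹v‖_H = ‖v‖_{H⁻¹}`; dividing by `‖w‖_{H⁻¹}` gives the bound.
-/

open Matrix

theorem Real.sqrt_le_of_le_mul_sqrt {a c : ℝ} (hc : 0 ≤ c) (h : a ≤ c * √a) : √a ≤ c := by
  rcases le_or_gt a 0 with ha | ha
  · rwa [Real.sqrt_eq_zero'.mpr ha]
  · refine le_of_mul_le_mul_right ?_ (Real.sqrt_pos.mpr ha)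
    rwa [Real.mul_self_sqrt ha.le]

namespace Matrix

variable {ι R : Type*} [Fintype ι] [DecidableEq ι]

theorem inv_mulVec_dotProduct_mulVec_inv_mulVec [CommRing R] {A : Matrix ι ι R}
    (hA : IsUnit A.det) (v : ι → R) :
    A⁻¹ *ᵥ v ⬝ᵥ A *ᵥ (A⁻¹ *ᵥ v) = v ⬝ᵥ A⁻¹ *ᵥ v := by
  rw [mulVec_mulVec, mul_nonsing_inv _ hA, one_mulVec, dotProduct_comm]

theorem sqrt_dotProduct_inv_mulVec_le {A : Matrix ι ι ℝ} (hA : IsUnit A.det) {w : ι → ℝ}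
    {C : ℝ} (hC : 0 ≤ C) (h : ∀ u, w ⬝ᵥ u ≤ C * √(u ⬝ᵥ A *ᵥ u)) :
    √(w ⬝ᵥ A⁻¹ *ᵥ w) ≤ C := by
  refine Real.sqrt_le_of_le_mul_sqrt hC ?_
  simpa only [inv_mulVec_dotProduct_mulVec_inv_mulVec hA] using h (A⁻¹ *ᵥ w)

end Matrix

theorem selfConcordant_dual_norm_bound_general {n : ℕ}
    (f : (Fin n → ℝ) → ℝ) (x : Fin n → ℝ)
    (H : Matrix (Fin n) (Fin n) ℝ) (hH : H.PosDef)
    (hsc : ∀ u v w₀ : Fin n → ℝ,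
      |iteratedFDeriv ℝ 3 f x ![u, v, w₀]| ≤
        2 * Real.sqrt (u ⬝ᵥ H.mulVec u) * Real.sqrt (v ⬝ᵥ H.mulVec v) *
          Real.sqrt (w₀ ⬝ᵥ H.mulVec w₀))
    (g w : Fin n → ℝ)
    (hw : ∀ u, w ⬝ᵥ u = -iteratedFDeriv ℝ 3 f x ![u, H⁻¹.mulVec g, H⁻¹.mulVec g]) :
    Real.sqrt (w ⬝ᵥ H⁻¹.mulVec w) ≤ 2 * (g ⬝ᵥ H⁻¹.mulVec g) := by
  have hdet : IsUnit H.det := (isUnit_iff_isUnit_det H).mp hH.isUnit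
  have hg : 0 ≤ g ⬝ᵥ H⁻¹ *ᵥ g := hH.posSemidef.inv.dotProduct_mulVec_nonneg g
  have hv : H⁻¹ *ᵥ g ⬝ᵥ H *ᵥ (H⁻¹ *ᵥ g) = g ⬝ᵥ H⁻¹ *ᵥ g :=
    inv_mulVec_dotProduct_mulVec_inv_mulVec hdet g
  refine sqrt_dotProduct_inv_mulVec_le hdet (by positivity) fun u => ?_
  calc w ⬝ᵥ u = -iteratedFDeriv ℝ 3 f x ![u, H⁻¹ *ᵥ g, H⁻¹ *ᵥ g] := hw u
    _ ≤ |iteratedFDeriv ℝ 3 f x ![u, H⁻¹ *ᵥ g, H⁻¹ *ᵥ g]| := neg_le_abs _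
    _ ≤ 2 * √(u ⬝ᵥ H *ᵥ u) * √(g ⬝ᵥ H⁻¹ *ᵥ g) * √(g ⬝ᵥ H⁻¹ *ᵥ g) := by
      simpa only [hv] using hsc u (H⁻¹ *ᵥ g) (H⁻¹ *ᵥ g)
    _ = 2 * (g ⬝ᵥ H⁻¹ *ᵥ g) * √(u ⬝ᵥ H *ᵥ u) := by
      rw [mul_assoc _ √_, Real.mul_self_sqrt hg]; ring

/-- Let `f` be `1`-self-concordant at `x` with positive definite Hessian `H = ∇²f(x)`,
i.e. `|D³f(x)[u,v,w]| ≤ 2 ‖u‖_H ‖v‖_H ‖w‖_H` for all `u, v, w`.  If `w` is defined by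
`⟨w, u⟩ = -D³f(x)[u, H⁻¹g, H⁻¹g]` for a vector `g`, then
`‖w‖_{H⁻¹} ≤ 2 ‖g‖²_{H⁻¹}`. -/
theorem selfConcordant_dual_norm_bound {n : ℕ}
    (f : (Fin n → ℝ) → ℝ) (x : Fin n → ℝ) (hf : ContDiff ℝ 3 f)
    (H : Matrix (Fin n) (Fin n) ℝ) (hH : H.PosDef)
    (hHf : ∀ u v, iteratedFDeriv ℝ 2 f x ![u, v] = u ⬝ᵥ H.mulVec v)
    (hsc : ∀ u v w₀ : Fin n → ℝ,
      |iteratedFDeriv ℝ 3 f x ![u, v, w₀]| ≤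
        2 * Real.sqrt (u ⬝ᵥ H.mulVec u) * Real.sqrt (v ⬝ᵥ H.mulVec v) *
          Real.sqrt (w₀ ⬝ᵥ H.mulVec w₀))
    (g w : Fin n → ℝ)
    (hw : ∀ u, w ⬝ᵥ u = -iteratedFDeriv ℝ 3 f x ![u, H⁻¹.mulVec g, H⁻¹.mulVec g]) :
    Real.sqrt (w ⬝ᵥ H⁻¹.mulVec w) ≤ 2 * (g ⬝ᵥ H⁻¹.mulVec g) :=
  selfConcordant_dual_norm_bound_general f x H hH hsc g w hw
end
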